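/- Let C be an n×n real matrix, X^0 ∈ Δ interior, and α_k > 0 for all k. Then for every K ≥ 0: X^{K+1}·CX̄^K − (1/A_K) ∑_{k=0}^K α_k X^k·CX^k ≥ RE(X^{K+1}, X^0)/A_K ≥ 0. -/

import Mathlib

open Filter Topology Finset Matrix

noncomputable section

/-- Membership in the probability simplex Δ ⊆ ℝ^n. -/
def isSimplex {n : ℕ} (X : Fin n → ℝ) : Prop :=
  (∀ i, 0 ≤ X i) ∧ ∑ i, X i = 1

/-- Interior point of the probability simplex. -/
def isInteriorPt {n : ℕ} (X : Fin n → ℝ) : Prop :=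
  (∀ i, 0 < X i) ∧ ∑ i, X i = 1

/-- The Hedge map T_α. -/
noncomputable def hedge {n : ℕ} (C : Matrix (Fin n) (Fin n) ℝ) (a : ℝ) (X : Fin n → ℝ) :
    Fin n → ℝ :=
  fun i => X i * Real.exp (a * C.mulVec X i) / ∑ j, X j * Real.exp (a * C.mulVec X j)

/-- Hedge iterates: X^0 = X0, X^{k+1} = T_{α_k}(X^k). -/
noncomputable def hiter {n : ℕ} (C : Matrix (Fin n) (Fin n) ℝ) (a : ℕ → ℝ) (X0 : Fin n → ℝ) :
    ℕ → Fin n → ℝ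
  | 0 => X0
  | k + 1 => hedge C (a k) (hiter C a X0 k)

/-- A_K = ∑_{k=0}^K α_k. -/
noncomputable def pSum (a : ℕ → ℝ) (K : ℕ) : ℝ := ∑ k ∈ Finset.range (K + 1), a k

/-- Weighted empirical average X̄^K = (1/A_K) ∑_{k=0}^K α_k X^k. -/
noncomputable def wavg {n : ℕ} (C : Matrix (Fin n) (Fin n) ℝ) (a : ℕ → ℝ) (X0 : Fin n → ℝ)
    (K : ℕ) : Fin n → ℝ :=
  (pSum a K)⁻¹ • ∑ k ∈ Finset.range (K + 1), a k • hiter C a X0 k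

/-- Relative entropy RE(Y, X) = ∑_{i : Y(i) > 0} Y(i) ln(Y(i)/X(i)). -/
noncomputable def RE {n : ℕ} (Y X : Fin n → ℝ) : ℝ :=
  ∑ i ∈ Finset.univ.filter (fun i => 0 < Y i), Y i * Real.log (Y i / X i)

/-- (CX)_max = max_i (CX)_i. -/
noncomputable def cmax {n : ℕ} (C : Matrix (Fin n) (Fin n) ℝ) (X : Fin n → ℝ) : ℝ :=
  ⨆ i, C.mulVec X i

/-- X̄ is a limit point of the sequence of weighted empirical averages. -/
def isLimitPoint {n : ℕ} (C : Matrix (Fin n) (Fin n) ℝ) (a : ℕ → ℝ) (X0 : Fin n → ℝ)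
    (Xb : Fin n → ℝ) : Prop :=
  ∃ φ : ℕ → ℕ, StrictMono φ ∧ Tendsto (fun j => wavg C a X0 (φ j)) atTop (𝓝 Xb)

/-! Writing `Z_k` for the normaliser of the `k`-th Hedge step, the update rule telescopes to
`ln (X^{K+1}(i) / X^0(i)) = ∑_{k ≤ K} (α_k (CX^k)_i - ln Z_k)`. Pairing with `X^{K+1}` gives
`RE(X^{K+1}, X^0) = A_K · X^{K+1}·CX̄^K - ∑_{k ≤ K} ln Z_k`, and Jensen's inequality for `exp`
bounds each `ln Z_k` below by `α_k X^k·CX^k`. Nonnegativity is Gibbs' inequality. -/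

open Real

theorem sum_mul_le_log_sum_mul_exp {ι : Type*} {s : Finset ι} {w : ι → ℝ} (f : ι → ℝ)
    (hw : ∀ i ∈ s, 0 ≤ w i) (hw₁ : ∑ i ∈ s, w i = 1) :
    ∑ i ∈ s, w i * f i ≤ log (∑ i ∈ s, w i * exp (f i)) := by
  have hJensen := convexOn_exp.map_sum_le hw hw₁ (fun i _ => Set.mem_univ (f i))
  simp only [smul_eq_mul] at hJensen
  calc ∑ i ∈ s, w i * f i = log (exp (∑ i ∈ s, w i * f i)) := (log_exp _).symm
    _ ≤ log (∑ i ∈ s, w i * exp (f i)) := log_le_log (exp_pos _) hJensen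

section Simplex

variable {n : ℕ}

theorem isInteriorPt.isSimplex {X : Fin n → ℝ} (hX : isInteriorPt X) : isSimplex X :=
  ⟨fun i => (hX.1 i).le, hX.2⟩

theorem RE_eq_sum_of_pos {Y : Fin n → ℝ} (X : Fin n → ℝ) (hY : ∀ i, 0 < Y i) :
    RE Y X = ∑ i, Y i * log (Y i / X i) := by
  rw [RE, filter_true_of_mem fun i _ => hY i]

theorem RE_nonneg {Y X : Fin n → ℝ} (hY : isSimplex Y) (hX : isInteriorPt X) : 0 ≤ RE Y X := by
  set S := univ.filter fun i => 0 < Y i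
  have hYS : ∑ i ∈ S, Y i = 1 :=
    (sum_filter_of_ne fun i _ h => (hY.1 i).lt_of_ne (Ne.symm h)).trans hY.2
  have hXS : ∑ i ∈ S, X i ≤ 1 :=
    hX.2 ▸ sum_le_sum_of_subset_of_nonneg (filter_subset _ _) fun i _ _ => (hX.1 i).le
  have hterm : ∀ i ∈ S, Y i - X i ≤ Y i * log (Y i / X i) := by
    intro i hi
    have hYi : 0 < Y i := (mem_filter.1 hi).2
    calc Y i - X i = Y i * (1 - (Y i / X i)⁻¹) := by field_simp
      _ ≤ Y i * log (Y i / X i) :=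
        mul_le_mul_of_nonneg_left (one_sub_inv_le_log_of_pos (div_pos hYi (hX.1 i))) hYi.le
  calc (0 : ℝ) ≤ ∑ i ∈ S, (Y i - X i) := by rw [sum_sub_distrib]; linarith
    _ ≤ RE Y X := sum_le_sum hterm

end Simplex

section Hedge

variable {n : ℕ} (C : Matrix (Fin n) (Fin n) ℝ)

def hedgeNormalizer (α : ℝ) (X : Fin n → ℝ) : ℝ :=
  ∑ j, X j * exp (α * (C *ᵥ X) j)

theorem hedge_apply (α : ℝ) (X : Fin n → ℝ) (i : Fin n) :
    hedge C α X i = X i * exp (α * (C *ᵥ X) i) / hedgeNormalizer C α X :=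
  rfl

theorem isInteriorPt.hedgeNormalizer_pos {X : Fin n → ℝ} (hX : isInteriorPt X) (α : ℝ) :
    0 < hedgeNormalizer C α X := by
  have : Nonempty (Fin n) := by
    by_contra h
    simpa [not_nonempty_iff.1 h] using hX.2
  exact sum_pos (fun j _ => mul_pos (hX.1 j) (exp_pos _)) univ_nonempty

theorem isInteriorPt.hedge {X : Fin n → ℝ} (hX : isInteriorPt X) (α : ℝ) :
    isInteriorPt (hedge C α X) := by
  have hZ := hX.hedgeNormalizer_pos C α
  refine ⟨fun i => div_pos (mul_pos (hX.1 i) (exp_pos _)) hZ, ?_⟩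
  simp only [hedge_apply, ← sum_div]
  exact div_self hZ.ne'

theorem isInteriorPt.hiter (a : ℕ → ℝ) {X0 : Fin n → ℝ} (hX0 : isInteriorPt X0) :
    ∀ k, isInteriorPt (hiter C a X0 k)
  | 0 => hX0
  | k + 1 => (hX0.hiter a k).hedge C (a k)

theorem log_hedge {X : Fin n → ℝ} (hX : isInteriorPt X) (α : ℝ) (i : Fin n) :
    log (hedge C α X i) = log (X i) + α * (C *ᵥ X) i - log (hedgeNormalizer C α X) := by
  rw [hedge_apply, log_div (mul_pos (hX.1 i) (exp_pos _)).ne' (hX.hedgeNormalizer_pos C α).ne',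
    log_mul (hX.1 i).ne' (exp_pos _).ne', log_exp]

theorem isInteriorPt.mul_dotProduct_mulVec_le_log_hedgeNormalizer {X : Fin n → ℝ}
    (hX : isInteriorPt X) (α : ℝ) : α * (X ⬝ᵥ C *ᵥ X) ≤ log (hedgeNormalizer C α X) := by
  rw [dotProduct, mul_sum, hedgeNormalizer]
  simpa only [mul_left_comm α] using
    sum_mul_le_log_sum_mul_exp (fun j => α * (C *ᵥ X) j) (fun j _ => (hX.1 j).le) hX.2

variable (a : ℕ → ℝ) {X0 : Fin n → ℝ}

theorem log_hiter (hX0 : isInteriorPt X0) (m : ℕ) (i : Fin n) :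
    log (hiter C a X0 m i) = log (X0 i) + ∑ k ∈ range m,
      (a k * (C *ᵥ hiter C a X0 k) i - log (hedgeNormalizer C (a k) (hiter C a X0 k))) := by
  induction m with
  | zero => simp [hiter]
  | succ m ih =>
    rw [hiter, log_hedge C (hX0.hiter C a m), ih, sum_range_succ]
    ring

theorem RE_hiter_eq (hX0 : isInteriorPt X0) (m : ℕ) :
    RE (hiter C a X0 m) X0 = ∑ k ∈ range m,
      (a k * (hiter C a X0 m ⬝ᵥ C *ᵥ hiter C a X0 k) -
        log (hedgeNormalizer C (a k) (hiter C a X0 k))) := by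
  have hY := hX0.hiter C a m
  simp_rw [RE_eq_sum_of_pos X0 hY.1, log_div (hY.1 _).ne' (hX0.1 _).ne', log_hiter C a hX0,
    add_sub_cancel_left, mul_sum]
  rw [sum_comm]
  refine sum_congr rfl fun k _ => ?_
  simp only [mul_sub, sum_sub_distrib, ← sum_mul, hY.2, one_mul, dotProduct, mul_sum]
  congr 1
  exact sum_congr rfl fun i _ => by ring

theorem dotProduct_mulVec_wavg (Y : Fin n → ℝ) (K : ℕ) :
    Y ⬝ᵥ C *ᵥ wavg C a X0 K =
      (pSum a K)⁻¹ * ∑ k ∈ range (K + 1), a k * (Y ⬝ᵥ C *ᵥ hiter C a X0 k) := by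
  simp only [wavg, mulVec_smul, mulVec_sum, dotProduct_smul, dotProduct_sum, smul_eq_mul]

end Hedge

theorem pSum_pos {a : ℕ → ℝ} (ha : ∀ k, 0 < a k) (K : ℕ) : 0 < pSum a K :=
  sum_pos (fun k _ => ha k) nonempty_range_add_one

/-- X^{K+1}·CX̄^K − (1/A_K) ∑ α_k X^k·CX^k ≥ RE(X^{K+1}, X^0)/A_K ≥ 0. -/
theorem stmt16 {n : ℕ} (C : Matrix (Fin n) (Fin n) ℝ)
    (a : ℕ → ℝ) (hapos : ∀ k, 0 < a k)
    (X0 : Fin n → ℝ) (hX0 : isInteriorPt X0) (K : ℕ) :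
    0 ≤ RE (hiter C a X0 (K + 1)) X0 / pSum a K ∧
    RE (hiter C a X0 (K + 1)) X0 / pSum a K ≤
      hiter C a X0 (K + 1) ⬝ᵥ C.mulVec (wavg C a X0 K) -
        (pSum a K)⁻¹ * ∑ k ∈ Finset.range (K + 1),
          a k * (hiter C a X0 k ⬝ᵥ C.mulVec (hiter C a X0 k)) := by
  have hA := pSum_pos hapos K
  have hY := hX0.hiter C a (K + 1)
  refine ⟨div_nonneg (RE_nonneg hY.isSimplex hX0) hA.le, ?_⟩
  have hJensen : ∀ k ∈ range (K + 1),
      a k * (hiter C a X0 k ⬝ᵥ C *ᵥ hiter C a X0 k) ≤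
        log (hedgeNormalizer C (a k) (hiter C a X0 k)) := fun k _ =>
    (hX0.hiter C a k).mul_dotProduct_mulVec_le_log_hedgeNormalizer C (a k)
  rw [RE_hiter_eq C a hX0, dotProduct_mulVec_wavg, div_eq_inv_mul, ← mul_sub]
  gcongr
  rw [sum_sub_distrib]
  linarith [sum_le_sum hJensen]
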